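/- arXiv:2505.15446 — 4 statements merged into one kernel-verified Lean document; each statement's English description precedes it below -/
import Mathlib

section
/- Every finite digraph that contains a spanning out-tree contains a final spanning out-tree, i.e., a spanning out-tree T such that for every arc (x,y) of D with level of x in T at least the level of y in T, the vertex y is an ancestor of x in T. -/
/-- An out-tree on `V`, encoded by its root and parent function: every vertex
reaches the root by iterating `parent`, and the root is its own parent. -/
structure OutTree (V : Type*) where
  root : V
  parent : V → V
  parent_root : parent root = root
  reach : ∀ v, ∃ n : ℕ, parent^[n] v = root

namespace OutTree

variable {V : Type*}

/-- The level of `v`: the number of vertices on the directed path in `T`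
from the root to `v`. -/
noncomputable def level (T : OutTree V) (v : V) : ℕ :=
  sInf {n : ℕ | T.parent^[n] v = T.root} + 1

/-- `u` is an ancestor of `v` in `T` (every vertex is an ancestor of itself). -/
def Anc (T : OutTree V) (u v : V) : Prop := ∃ n : ℕ, T.parent^[n] v = u

/-- `T` is a spanning out-tree of the digraph `D`: every tree arc (from parent
to child) is an arc of `D`. -/
def SpanningOf (T : OutTree V) (D : V → V → Prop) : Prop :=
  ∀ v, v ≠ T.root → D (T.parent v) v

end OutTree



namespace OutTree

variable {V : Type*}

noncomputable def hit (T : OutTree V) (v : V) : ℕ :=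
  sInf {n : ℕ | T.parent^[n] v = T.root}

lemma hit_spec (T : OutTree V) (v : V) : T.parent^[T.hit v] v = T.root :=
  Nat.sInf_mem (T.reach v)

lemma hit_min (T : OutTree V) {v : V} {k : ℕ} (h : k < T.hit v) :
    T.parent^[k] v ≠ T.root :=
  Nat.notMem_of_lt_sInf h

lemma level_eq (T : OutTree V) (v : V) : T.level v = T.hit v + 1 := rfl

lemma root_iter (T : OutTree V) (n : ℕ) : T.parent^[n] T.root = T.root :=
  Function.iterate_fixed T.parent_root n

lemma hit_eq_add (T : OutTree V) {v w : V} {n : ℕ}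
    (hne : ∀ k < n, T.parent^[k] v ≠ T.root) (hw : T.parent^[n] v = w) :
    T.hit v = n + T.hit w := by
  have hle : T.hit v ≤ n + T.hit w := by
    apply Nat.sInf_le
    show T.parent^[n + T.hit w] v = T.root
    rw [add_comm, Function.iterate_add_apply, hw, T.hit_spec]
  have hn : n ≤ T.hit v := by
    by_contra h
    exact hne _ (not_le.mp h) (T.hit_spec v)
  have : T.parent^[T.hit v - n] w = T.root := by
    rw [← hw, ← Function.iterate_add_apply, Nat.sub_add_cancel hn, T.hit_spec]
  have hw' : T.hit w ≤ T.hit v - n := Nat.sInf_le this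
  omega

lemma hit_lt_card [Fintype V] (T : OutTree V) (v : V) :
    T.hit v < Fintype.card V := by
  have hinj : Function.Injective (fun i : Fin (T.hit v + 1) => T.parent^[i.1] v) := by
    intro i j hij
    by_contra hne
    rcases lt_or_gt_of_ne (fun h : i.1 = j.1 => hne (Fin.ext h)) with h | h
    · -- i < j, derive contradiction
      have hj : j.1 ≤ T.hit v := Nat.lt_succ_iff.mp j.2
      have : T.parent^[T.hit v - j.1 + i.1] v = T.root := by
        have := congrArg (T.parent^[T.hit v - j.1]) hij
        simp only [← Function.iterate_add_apply] at this
        rw [this]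
        have : T.hit v - j.1 + j.1 = T.hit v := Nat.sub_add_cancel hj
        rw [this, T.hit_spec]
      exact T.hit_min (by omega) this
    · have hj : i.1 ≤ T.hit v := Nat.lt_succ_iff.mp i.2
      have : T.parent^[T.hit v - i.1 + j.1] v = T.root := by
        have := congrArg (T.parent^[T.hit v - i.1]) hij
        simp only [← Function.iterate_add_apply] at this
        rw [← this]
        have : T.hit v - i.1 + i.1 = T.hit v := Nat.sub_add_cancel hj
        rw [this, T.hit_spec]
      exact T.hit_min (by omega) this
  have := Fintype.card_le_of_injective _ hinj
  simpa using this

end OutTree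

lemma improve {V : Type*} [Fintype V] {D : V → V → Prop} (T : OutTree V)
    (hT : T.SpanningOf D) {x y : V} (hxy : D x y)
    (hlev : T.level y ≤ T.level x) (hna : ¬ T.Anc y x) :
    ∃ T' : OutTree V, T'.SpanningOf D ∧ (∑ v, T.level v) < ∑ v, T'.level v := by
  classical
  have hyr : y ≠ T.root := by
    rintro rfl; exact hna (T.reach x)
  set P' : V → V := fun v => if v = y then x else T.parent v with hP'
  have agree : ∀ (v : V) (n : ℕ), (∀ k < n, T.parent^[k] v ≠ y) →
      P'^[n] v = T.parent^[n] v := by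
    intro v n
    induction n with
    | zero => intro _; rfl
    | succ n ih =>
      intro h
      rw [Function.iterate_succ_apply', Function.iterate_succ_apply',
        ih (fun k hk => h k (hk.trans (Nat.lt_succ_self n)))]
      have hne : T.parent^[n] v ≠ y := h n (Nat.lt_succ_self n)
      simp [hP', hne]
  have agreeX : ∀ (v : V), ¬ T.Anc y v → ∀ n, P'^[n] v = T.parent^[n] v :=
    fun v hv n => agree v n (fun k _ hk => hv ⟨k, hk⟩)
  have hrootne : ∀ (v : V) (k m : ℕ), k ≤ m → T.parent^[m] v = y →
      T.parent^[k] v ≠ T.root := by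
    intro v k m hkm hmy hk
    have hm : T.parent^[m] v = T.root := by
      rw [← Nat.sub_add_cancel hkm, Function.iterate_add_apply, hk, T.root_iter]
    rw [hm] at hmy
    exact hyr hmy.symm
  have hreach : ∀ v, ∃ n, P'^[n] v = T.root := by
    intro v
    by_cases hv : T.Anc y v
    · set m := sInf {k | T.parent^[k] v = y} with hm
      have hmy : T.parent^[m] v = y := Nat.sInf_mem hv
      have hmin : ∀ k < m, T.parent^[k] v ≠ y := fun k hk => Nat.notMem_of_lt_sInf hk
      have h1 : P'^[m] v = y := by rw [agree v m hmin, hmy]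
      have h2 : P'^[m+1] v = x := by
        rw [Function.iterate_succ_apply', h1]; simp [hP']
      refine ⟨T.hit x + (m + 1), ?_⟩
      rw [Function.iterate_add_apply, h2, agreeX x hna, T.hit_spec]
    · exact ⟨T.hit v, by rw [agreeX v hv, T.hit_spec]⟩
  set T' : OutTree V :=
    ⟨T.root, P', by simp only [hP', if_neg (Ne.symm hyr), T.parent_root], hreach⟩ with hT'
  have hTp : T'.parent = P' := rfl
  have hTr : T'.root = T.root := rfl
  have hit_eq : ∀ v, ¬ T.Anc y v → T'.hit v = T.hit v := by
    intro v hv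
    unfold OutTree.hit
    congr 1
    ext n
    simp only [Set.mem_setOf_eq, hTp, hTr, agreeX v hv n]
  have hitX : T'.hit x = T.hit x := hit_eq x hna
  have hxy' : T.hit y ≤ T.hit x := by
    rw [OutTree.level_eq, OutTree.level_eq] at hlev; omega
  have hit_gt : ∀ v, T.Anc y v → T.hit v < T'.hit v := by
    intro v hv
    set m := sInf {k | T.parent^[k] v = y} with hm
    have hmy : T.parent^[m] v = y := Nat.sInf_mem hv
    have hmin : ∀ k < m, T.parent^[k] v ≠ y := fun k hk => Nat.notMem_of_lt_sInf hk
    have h1 : P'^[m] v = y := by rw [agree v m hmin, hmy]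
    have h2 : P'^[m+1] v = x := by
      rw [Function.iterate_succ_apply', h1]; simp [hP']
    have e1 : T.hit v = m + T.hit y :=
      T.hit_eq_add (fun k hk => hrootne v k m hk.le hmy) hmy
    have e2 : T'.hit v = (m + 1) + T'.hit x := by
      refine T'.hit_eq_add ?_ ?_
      · intro k hk
        have hk' : k ≤ m := Nat.lt_succ_iff.mp hk
        have ha : P'^[k] v = T.parent^[k] v :=
          agree v k (fun j hj => hmin j (hj.trans_le hk'))
        rw [hTp, hTr, ha]
        exact hrootne v k m hk' hmy
      · rw [hTp]; exact h2
    omega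
  have hspan : T'.SpanningOf D := by
    intro v hv
    rw [hTr] at hv
    by_cases h : v = y
    · have hp : T'.parent v = x := by rw [hTp]; simp [hP', h]
      rw [hp, h]; exact hxy
    · have : T'.parent v = T.parent v := by rw [hTp]; simp [hP', h]
      rw [this]; exact hT v hv
  refine ⟨T', hspan, ?_⟩
  apply Finset.sum_lt_sum
  · intro v _
    rw [OutTree.level_eq, OutTree.level_eq]
    by_cases hv : T.Anc y v
    · have := hit_gt v hv; omega
    · rw [hit_eq v hv]
  · refine ⟨y, Finset.mem_univ y, ?_⟩
    rw [OutTree.level_eq, OutTree.level_eq]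
    have := hit_gt y ⟨0, rfl⟩
    omega

/-- Every finite digraph containing a spanning out-tree contains a final
spanning out-tree: one where every backward arc `(x, y)` (i.e. with
`level x ≥ level y`) goes to an ancestor `y` of `x`. -/
theorem stmt2 {V : Type*} [Fintype V] (D : V → V → Prop)
    (T : OutTree V) (hT : T.SpanningOf D) :
    ∃ T' : OutTree V, T'.SpanningOf D ∧
      ∀ x y, D x y → T'.level y ≤ T'.level x → T'.Anc y x := by
  classical
  have hbound : ∀ (S : OutTree V), (∑ v, S.level v) ≤ Fintype.card V * Fintype.card V := by
    intro S
    calc (∑ v, S.level v) ≤ ∑ _v : V, Fintype.card V :=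
          Finset.sum_le_sum (fun v _ => by
            have := S.hit_lt_card v; rw [OutTree.level_eq]; omega)
      _ = Fintype.card V * Fintype.card V := by
          simp [Finset.sum_const, mul_comm]
  suffices h : ∀ (k : ℕ) (S : OutTree V), S.SpanningOf D →
      Fintype.card V * Fintype.card V ≤ (∑ v, S.level v) + k →
      ∃ T' : OutTree V, T'.SpanningOf D ∧
        ∀ x y, D x y → T'.level y ≤ T'.level x → T'.Anc y x by
    exact h (Fintype.card V * Fintype.card V) T hT (by omega)
  intro k
  induction k with
  | zero =>
    intro S hS hk
    by_cases hfin : ∀ x y, D x y → S.level y ≤ S.level x → S.Anc y x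
    · exact ⟨S, hS, hfin⟩
    · push_neg at hfin
      obtain ⟨x, y, hxy, hl, hna⟩ := hfin
      obtain ⟨T'', hs, hlt⟩ := improve S hS hxy hl hna
      have := hbound T''
      omega
  | succ k ih =>
    intro S hS hk
    by_cases hfin : ∀ x y, D x y → S.level y ≤ S.level x → S.Anc y x
    · exact ⟨S, hS, hfin⟩
    · push_neg at hfin
      obtain ⟨x, y, hxy, hl, hna⟩ := hfin
      obtain ⟨T'', hs, hlt⟩ := improve S hS hxy hl hna
      exact ih T'' hs (by omega)
end

section
/- Every digraph D whose chromatic number is at least n contains a directed path with n vertices (i.e., of length n−1). -/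
/-!
Choose a maximal acyclic subdigraph `S` of `D` and colour each vertex by the length of a longest
`S`-path ending at it. Along an arc of `S` this colour strictly increases. An arc of `D` outside
`S` closes a cycle when added to `S`, so `S` contains a path from its head back to its tail, along
which the colour strictly increases the other way. Hence the colouring is proper, and a graph with
at least `n` colours forces an `S`-path, hence a directed path of `D`, on `n` vertices.
-/

open Relation
open scoped SetRel

namespace SetRel

variable {V : Type*} {R S : SetRel V V}

def IsAcyclic (S : SetRel V V) : Prop := ∀ v, ¬ TransGen (· ~[S] ·) v v

lemma isAcyclic_empty : (∅ : SetRel V V).IsAcyclic := fun _ h => by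
  cases h with
  | single h | tail _ h => exact Set.notMem_empty _ h

lemma transGen_insert {u v a b : V} (h : TransGen (· ~[insert (u, v) S] ·) a b) :
    TransGen (· ~[S] ·) a b ∨ ReflTransGen (· ~[S] ·) a u ∧ ReflTransGen (· ~[S] ·) v b := by
  induction h with
  | single hab =>
    rcases hab with hab | hab
    · obtain ⟨rfl, rfl⟩ := Prod.mk.inj hab
      exact .inr ⟨.refl, .refl⟩
    · exact .inl (.single hab)
  | tail _ hbc ih =>
    rcases hbc with hbc | hbc
    · obtain ⟨rfl, rfl⟩ := Prod.mk.inj hbc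
      exact .inr ⟨ih.elim TransGen.to_reflTransGen And.left, .refl⟩
    · exact ih.imp (·.tail hbc) fun ⟨hau, hvb⟩ => ⟨hau, hvb.tail hbc⟩

lemma exists_maximal_isAcyclic [Finite V] (R : SetRel V V) :
    ∃ S, Maximal (fun S => S ⊆ R ∧ S.IsAcyclic) S := by
  obtain ⟨S, -, hS⟩ := Finite.exists_le_maximal (p := fun S : SetRel V V => S ⊆ R ∧ S.IsAcyclic)
    ⟨Set.empty_subset R, isAcyclic_empty⟩
  exact ⟨S, hS⟩

lemma reflTransGen_of_maximal_isAcyclic (hS : Maximal (fun S => S ⊆ R ∧ S.IsAcyclic) S)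
    {u v : V} (huv : u ~[R] v) (hS_uv : ¬ u ~[S] v) : ReflTransGen (· ~[S] ·) v u := by
  have hcyclic : ¬ (insert (u, v) S).IsAcyclic := fun hacyc =>
    hS_uv (hS.mem_of_prop_insert ⟨Set.insert_subset huv hS.prop.1, hacyc⟩)
  obtain ⟨w, hw⟩ := not_forall_not.mp hcyclic
  rcases transGen_insert hw with hw | ⟨hwu, hvw⟩
  · exact (hS.prop.2 w hw).elim
  · exact hvw.trans hwu

end SetRel

namespace RelSeries

variable {V : Type*} {S : SetRel V V}

lemma transGen_of_lt (p : RelSeries S) {i j : Fin (p.length + 1)} (hij : i < j) :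
    TransGen (· ~[S] ·) (p i) (p j) := by
  let T : SetRel V V := {x | TransGen (· ~[S] ·) x.1 x.2}
  have : T.IsTrans := ⟨fun _ _ _ => TransGen.trans⟩
  exact (p.ofLE (s := T) fun _ hx => TransGen.single hx).rel_of_lt hij

lemma injective_of_isAcyclic (hS : S.IsAcyclic) (p : RelSeries S) : Function.Injective p := by
  intro i j hij
  by_contra hne
  rcases lt_or_gt_of_ne hne with hlt | hlt <;>
  · have hcycle := p.transGen_of_lt hlt
    rw [hij] at hcycle
    exact hS _ hcycle

lemma length_lt_card_of_isAcyclic [Fintype V] (hS : S.IsAcyclic) (p : RelSeries S) :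
    p.length < Fintype.card V := by
  simpa using Fintype.card_le_of_injective p (p.injective_of_isAcyclic hS)

end RelSeries

namespace SetRel

variable {V : Type*} [Fintype V] {S : SetRel V V}

/-- For acyclic `S` every series has length below `Fintype.card V`, so the cap in
`Nat.findGreatest` is never reached. -/
noncomputable def height (S : SetRel V V) (v : V) : ℕ :=
  open Classical in
  Nat.findGreatest (fun k => ∃ p : RelSeries S, p.length = k ∧ p.last = v) (Fintype.card V)

lemma exists_relSeries_length_height (S : SetRel V V) (v : V) :
    ∃ p : RelSeries S, p.length = S.height v ∧ p.last = v :=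
  open Classical in Nat.findGreatest_spec (P := fun k => ∃ p : RelSeries S, p.length = k ∧ p.last = v)
    (Nat.zero_le _) ⟨RelSeries.singleton S v, rfl, rfl⟩

lemma IsAcyclic.height_lt (hS : S.IsAcyclic) {u v : V} (huv : u ~[S] v) :
    S.height u < S.height v := by
  classical
  obtain ⟨p, hlen, hlast⟩ := exists_relSeries_length_height S u
  let q := p.snoc v (hlast ▸ huv)
  have hq : q.length = S.height u + 1 := by simp [q, hlen]
  have hqv : q.length ≤ S.height v :=
    Nat.le_findGreatest (q.length_lt_card_of_isAcyclic hS).le ⟨q, rfl, by simp [q]⟩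
  omega

lemma IsAcyclic.height_lt_of_transGen (hS : S.IsAcyclic) {u v : V}
    (huv : TransGen (· ~[S] ·) u v) : S.height u < S.height v := by
  induction huv with
  | single h => exact hS.height_lt h
  | tail _ h ih => exact ih.trans (hS.height_lt h)

lemma height_ne_of_maximal_isAcyclic {R : SetRel V V}
    (hS : Maximal (fun S => S ⊆ R ∧ S.IsAcyclic) S) {u v : V} (huv : u ~[R] v) (hne : u ≠ v) :
    S.height u ≠ S.height v := by
  by_cases hS_uv : u ~[S] v
  · exact (hS.prop.2.height_lt hS_uv).ne
  rcases reflTransGen_iff_eq_or_transGen.mp (reflTransGen_of_maximal_isAcyclic hS huv hS_uv)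
    with rfl | hvu
  · exact (hne rfl).elim
  · exact (hS.prop.2.height_lt_of_transGen hvu).ne'

end SetRel

open SetRel in
lemma SimpleGraph.colorable_fromRel_of_height_lt {V : Type*} [Fintype V] {D : V → V → Prop}
    {S : SetRel V V} (hS : Maximal (fun S : SetRel V V => S ⊆ {x | D x.1 x.2} ∧ S.IsAcyclic) S)
    {m : ℕ} (hm : ∀ v, S.height v < m) : (fromRel D).Colorable m := by
  refine (colorable_iff_exists_bdd_nat_coloring m).mpr ⟨Coloring.mk S.height ?_, hm⟩
  rintro u v ⟨hne, huv | hvu⟩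
  · exact height_ne_of_maximal_isAcyclic hS huv hne
  · exact (height_ne_of_maximal_isAcyclic hS hvu hne.symm).symm

/-- Gallai–Hasse–Roy–Vitaver: every digraph with chromatic number at least `n`
contains a directed path on `n` vertices. -/
theorem stmt8 {V : Type*} [Fintype V] (D : V → V → Prop) (n : ℕ)
    (h : (n : ℕ∞) ≤ (SimpleGraph.fromRel D).chromaticNumber) :
    ∃ p : Fin n → V, Function.Injective p ∧
      ∀ (i : ℕ) (hi : i + 1 < n), D (p ⟨i, Nat.lt_of_succ_lt hi⟩) (p ⟨i + 1, hi⟩) := by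
  rcases n with _ | k
  · exact ⟨Fin.elim0, fun i => i.elim0, fun i hi => absurd hi (Nat.not_lt_zero _)⟩
  obtain ⟨S, hS⟩ := SetRel.exists_maximal_isAcyclic {x : V × V | D x.1 x.2}
  obtain ⟨v, hv⟩ : ∃ v, k ≤ S.height v := by
    by_contra! hlt
    have hk : ((k + 1 : ℕ) : ℕ∞) ≤ k :=
      h.trans (SimpleGraph.colorable_fromRel_of_height_lt hS hlt).chromaticNumber_le
    exact absurd (by exact_mod_cast hk) (Nat.not_succ_le_self k)
  obtain ⟨p, hlen, -⟩ := S.exists_relSeries_length_height v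
  have hk : k + 1 ≤ p.length + 1 := by omega
  exact ⟨fun i => p (Fin.castLE hk i),
    (p.injective_of_isAcyclic hS.prop.2).comp (Fin.castLE_injective hk),
    fun i hi => hS.prop.1 (p.step ⟨i, by omega⟩)⟩
end

section
/- Let k ≥ 2 be an integer and D an oriented graph (a digraph with no 2-cycles and no loops). If the chromatic number of D is at least 8k−7, then D contains an antidirected cycle of length at least 2k. -/
/-!
A graph of chromatic number at least `8k - 7` is not `(8k - 8)`-degenerate, so some nonempty
vertex set `W` induces minimum degree at least `8k - 8` and hence spans at least `4(k - 1)|W|`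
arcs. Averaging over all two-colourings, some disjoint `A, B ⊆ W` carry at least `(k - 1)|W|`
arcs from `A` to `B`; deleting vertices of low degree then leaves `A' ⊆ A`, `B' ⊆ B` in which
every vertex of `A'` has at least `k` out-neighbours in `B'` and every vertex of `B'` at least `k`
in-neighbours in `A'`. In the bipartite graph of these arcs every cycle is antidirected. Closing a
longest path at the last neighbour of its first vertex gives a cycle through all `≥ k` neighbours
of that vertex, which lie on the opposite side, so the cycle has length at least `2k`.
-/

/-- `D` contains an antidirected cycle of length `2 * m`, with sources
`s 0, …, s (m-1)` and sinks `t 0, …, t (m-1)` arranged alternately: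
`s i` sends arcs to `t i` and to `t (i-1)`. -/
def HasAntidirCycle {V : Type*} (D : V → V → Prop) (m : ℕ) : Prop :=
  ∃ s t : ZMod m → V,
    Function.Injective s ∧ Function.Injective t ∧ (∀ i j, s i ≠ t j) ∧
    ∀ i, D (s i) (t i) ∧ D (s i) (t (i - 1))

open Finset

section AntidirectedCycle

variable {V : Type*} {D : V → V → Prop}

/-- Reversing all arcs swaps sources and sinks; reindexing by `i ↦ -i` restores the convention
that `s i` points to `t i` and `t (i - 1)`. -/
lemma HasAntidirCycle.of_flip {m : ℕ} (h : HasAntidirCycle (flip D) m) : HasAntidirCycle D m := by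
  obtain ⟨s, t, hs, ht, hst, hD⟩ := h
  refine ⟨t ∘ Neg.neg, s ∘ Neg.neg, ht.comp neg_injective, hs.comp neg_injective,
    fun i j => (hst _ _).symm, fun i => ⟨(hD (-i)).1, ?_⟩⟩
  simpa [flip] using (hD (1 - i)).2

lemma hasAntidirCycle_of_nat {m : ℕ} (hm : 0 < m) (s t : ℕ → V) (hs : Set.InjOn s (Set.Iio m))
    (ht : Set.InjOn t (Set.Iio m)) (hst : ∀ i < m, ∀ j < m, s i ≠ t j)
    (hD : ∀ i < m, D (s i) (t i) ∧ D (s ((i + 1) % m)) (t i)) : HasAntidirCycle D m := by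
  have : NeZero m := ⟨hm.ne'⟩
  refine ⟨fun i => s i.val, fun i => t i.val,
    fun i j h => ZMod.val_injective m (hs (ZMod.val_lt i) (ZMod.val_lt j) h),
    fun i j h => ZMod.val_injective m (ht (ZMod.val_lt i) (ZMod.val_lt j) h),
    fun i j => hst _ (ZMod.val_lt i) _ (ZMod.val_lt j), fun i => ⟨(hD _ (ZMod.val_lt i)).1, ?_⟩⟩
  have hval : ((i - 1).val + 1) % m = i.val := by
    rw [← ZMod.val_natCast, Nat.cast_add, ZMod.natCast_zmod_val, Nat.cast_one, sub_add_cancel]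
  have := (hD _ (ZMod.val_lt (i - 1))).2
  rwa [hval] at this

end AntidirectedCycle

lemma add_one_le_card_of_injOn_Iic {V : Type*} [Fintype V] {x : ℕ → V} {n : ℕ}
    (hx : Set.InjOn x (Set.Iic n)) : n + 1 ≤ Fintype.card V := by
  simpa using card_le_card_of_injOn x (s := Iic n) (fun _ _ => mem_univ _) (by simpa using hx)

namespace SimpleGraph

variable {V : Type*} (G : SimpleGraph V)

lemma exists_update_ne_of_card_lt [DecidableRel G.Adj] [DecidableEq V] {c : ℕ} {W : Finset V}
    {v : V} (hv : v ∈ W) (hdeg : #{w ∈ W | G.Adj v w} < c) (f : V → Fin c)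
    (hf : ∀ x ∈ W.erase v, ∀ y ∈ W.erase v, G.Adj x y → f x ≠ f y) :
    ∃ col, ∀ x ∈ W, ∀ y ∈ W, G.Adj x y →
      Function.update f v col x ≠ Function.update f v col y := by
  have hused : #(image f {w ∈ W | G.Adj v w}) < #(univ : Finset (Fin c)) := by
    simpa using card_image_le.trans_lt hdeg
  obtain ⟨col, -, hcol⟩ := exists_mem_notMem_of_card_lt_card hused
  have hnew : ∀ w ∈ W, G.Adj v w → col ≠ f w := fun w hw hvw h =>
    hcol (mem_image.2 ⟨w, mem_filter.2 ⟨hw, hvw⟩, h.symm⟩)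
  refine ⟨col, fun x hx y hy hxy => ?_⟩
  rcases eq_or_ne x v with rfl | hxv
  · simpa [hxy.ne'] using hnew y hy hxy
  rcases eq_or_ne y v with rfl | hyv
  · simpa [hxy.ne] using (hnew x hx hxy.symm).symm
  simpa [hxv, hyv] using hf x (mem_erase.2 ⟨hxv, hx⟩) y (mem_erase.2 ⟨hyv, hy⟩) hxy

lemma colorable_of_forall_exists_card_lt [Fintype V] [DecidableRel G.Adj] {c : ℕ}
    (h : ∀ W : Finset V, W.Nonempty → ∃ v ∈ W, #{w ∈ W | G.Adj v w} < c) : G.Colorable c := by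
  classical
  rcases isEmpty_or_nonempty V with hV | ⟨⟨v₀⟩⟩
  · exact .of_isEmpty c
  have hc : 0 < c := by
    obtain ⟨v, -, hv⟩ := h univ ⟨v₀, mem_univ v₀⟩
    omega
  have key : ∀ W : Finset V, ∃ f : V → Fin c, ∀ x ∈ W, ∀ y ∈ W, G.Adj x y → f x ≠ f y := by
    intro W
    induction W using strongInduction with
    | H W ih =>
      rcases W.eq_empty_or_nonempty with rfl | hW
      · exact ⟨fun _ => ⟨0, hc⟩, by simp⟩
      obtain ⟨v, hv, hdeg⟩ := h W hW
      obtain ⟨f, hf⟩ := ih _ (erase_ssubset hv)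
      obtain ⟨col, hcol⟩ := G.exists_update_ne_of_card_lt hv hdeg f hf
      exact ⟨_, hcol⟩
  obtain ⟨f, hf⟩ := key univ
  exact ⟨⟨f, fun hxy => hf _ (mem_univ _) _ (mem_univ _) hxy⟩⟩

lemma exists_nonempty_forall_le_card_of_le_chromaticNumber [Fintype V] [DecidableRel G.Adj]
    {c : ℕ} (h : ((c + 1 : ℕ) : ℕ∞) ≤ G.chromaticNumber) :
    ∃ W : Finset V, W.Nonempty ∧ ∀ v ∈ W, c ≤ #{w ∈ W | G.Adj v w} := by
  by_contra! hW
  have := h.trans (G.colorable_of_forall_exists_card_lt hW).chromaticNumber_le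
  norm_cast at this
  omega

lemma exists_path_cons {x : ℕ → V} {n : ℕ} (hx : Set.InjOn x (Set.Iic n))
    (hpath : ∀ i < n, G.Adj (x i) (x (i + 1))) {w : V} (hw : G.Adj w (x 0))
    (hoff : ∀ j ≤ n, x j ≠ w) :
    ∃ y : ℕ → V, Set.InjOn y (Set.Iic (n + 1)) ∧ ∀ i < n + 1, G.Adj (y i) (y (i + 1)) := by
  refine ⟨fun i => if i = 0 then w else x (i - 1), fun i hi j hj hij => ?_, fun i hi => ?_⟩
  · simp only [Set.mem_Iic] at hi hj
    rcases Nat.eq_zero_or_pos i with rfl | hi0 <;> rcases Nat.eq_zero_or_pos j with rfl | hj0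
    · rfl
    · simp only [if_pos, hj0.ne', if_false] at hij
      exact absurd hij.symm (hoff _ (by omega))
    · simp only [if_pos, hi0.ne', if_false] at hij
      exact absurd hij (hoff _ (by omega))
    · simp only [hi0.ne', hj0.ne', if_false] at hij
      have := hx (by simp only [Set.mem_Iic]; omega) (by simp only [Set.mem_Iic]; omega) hij
      omega
  · rcases Nat.eq_zero_or_pos i with rfl | hi0
    · simpa using hw
    · simpa [hi0.ne', Nat.sub_add_cancel hi0] using hpath (i - 1) (by omega)

variable [Fintype V]

lemma exists_path_adj_imp_mem {a b : V} (hab : G.Adj a b) :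
    ∃ n, ∃ x : ℕ → V, 0 < n ∧ Set.InjOn x (Set.Iic n) ∧ (∀ i < n, G.Adj (x i) (x (i + 1))) ∧
      ∀ w, G.Adj (x 0) w → ∃ j ≤ n, x j = w := by
  classical
  let IsPath (n : ℕ) : Prop :=
    ∃ x : ℕ → V, Set.InjOn x (Set.Iic n) ∧ ∀ i < n, G.Adj (x i) (x (i + 1))
  have hbound {n : ℕ} (hn : IsPath n) : n < Fintype.card V := by
    obtain ⟨x, hx, -⟩ := hn
    have := add_one_le_card_of_injOn_Iic hx
    omega
  have hedge : IsPath 1 := by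
    refine ⟨fun i => if i = 0 then a else b, fun i hi j hj => ?_, fun i hi => ?_⟩
    · simp only [Set.mem_Iic] at hi hj
      interval_cases i <;> interval_cases j <;> simp [hab.ne, hab.ne']
    · obtain rfl : i = 0 := by omega
      simpa using hab
  set N := Nat.findGreatest IsPath (Fintype.card V)
  obtain ⟨x, hx, hpath⟩ : IsPath N := Nat.findGreatest_spec (hbound hedge).le hedge
  have hN : 1 ≤ N := Nat.le_findGreatest (hbound hedge).le hedge
  refine ⟨N, x, hN, hx, hpath, fun w hw => ?_⟩
  by_contra! hoff
  have hlonger : IsPath (N + 1) := G.exists_path_cons hx hpath hw.symm hoff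
  have := Nat.le_findGreatest (hbound hlonger).le hlonger
  omega

/-- Cut a longest path at the last neighbour of its first vertex. -/
lemma exists_cycle_adj_imp_mem {a b : V} (hab : G.Adj a b) :
    ∃ n, ∃ x : ℕ → V, Set.InjOn x (Set.Iic n) ∧ (∀ i < n, G.Adj (x i) (x (i + 1))) ∧
      G.Adj (x n) (x 0) ∧ ∀ w, G.Adj (x 0) w → ∃ j ≤ n, x j = w := by
  classical
  obtain ⟨N, x, hN, hx, hpath, hnbr⟩ := G.exists_path_adj_imp_mem hab
  have h1 : G.Adj (x 1) (x 0) := (hpath 0 hN).symm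
  let P (j : ℕ) : Prop := G.Adj (x j) (x 0)
  have hn : Nat.findGreatest P N ≤ N := Nat.findGreatest_le N
  refine ⟨Nat.findGreatest P N, x, hx.mono (Set.Iic_subset_Iic.2 hn),
    fun i hi => hpath i (by omega), Nat.findGreatest_spec (P := P) hN h1, fun w hw => ?_⟩
  obtain ⟨j, hj, rfl⟩ := hnbr w hw
  exact ⟨j, Nat.le_findGreatest hj hw.symm, rfl⟩

end SimpleGraph

section Interedges

variable {V : Type*} {D : V → V → Prop} [DecidableRel D]

lemma card_interedges_eq_sum_left (A B : Finset V) :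
    #(Rel.interedges D A B) = ∑ a ∈ A, #{b ∈ B | D a b} := by
  simp only [Rel.interedges, card_filter, sum_product]

lemma card_interedges_eq_sum_right (A B : Finset V) :
    #(Rel.interedges D A B) = ∑ b ∈ B, #{a ∈ A | D a b} := by
  simp only [Rel.interedges, card_filter, sum_product_right]

lemma nonempty_of_card_interedges_pos {A B : Finset V} (h : 0 < #(Rel.interedges D A B)) :
    A.Nonempty ∧ B.Nonempty := by
  obtain ⟨p, hp⟩ := card_pos.1 h
  exact ⟨⟨p.1, (Rel.mem_interedges_iff.1 hp).1⟩, ⟨p.2, (Rel.mem_interedges_iff.1 hp).2.1⟩⟩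

lemma Nat.mul_sub_one_sub_one_lt {d s e x : ℕ} (hs : 2 ≤ s) (hx : x ≤ d)
    (h : d * (s - 1) < e + x) : d * (s - 1 - 1) < e := by
  obtain ⟨t, rfl⟩ : ∃ t, s = t + 2 := ⟨s - 2, by omega⟩
  rw [show t + 2 - 1 = t + 1 by omega, Nat.mul_succ] at h
  rw [show t + 2 - 1 - 1 = t by omega]
  omega

variable [DecidableEq V]

lemma card_interedges_erase_left_add {A : Finset V} {a : V} (ha : a ∈ A) (B : Finset V) :
    #(Rel.interedges D (A.erase a) B) + #{b ∈ B | D a b} = #(Rel.interedges D A B) := by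
  rw [card_interedges_eq_sum_left, card_interedges_eq_sum_left, sum_erase_add _ _ ha]

lemma card_interedges_erase_right_add (A : Finset V) {B : Finset V} {b : V} (hb : b ∈ B) :
    #(Rel.interedges D A (B.erase b)) + #{a ∈ A | D a b} = #(Rel.interedges D A B) := by
  rw [card_interedges_eq_sum_right, card_interedges_eq_sum_right, sum_erase_add _ _ hb]

/-- Deleting a vertex of degree at most `d` preserves `d * (|A| + |B| - 1) < e(A, B)`, so a
minimal pair satisfying this inequality has all degrees above `d`. -/
lemma exists_subset_forall_lt_card_filter {d : ℕ} {A B : Finset V}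
    (h : d * (#A + #B - 1) < #(Rel.interedges D A B)) :
    ∃ A' ⊆ A, ∃ B' ⊆ B, A'.Nonempty ∧ (∀ a ∈ A', d < #{b ∈ B' | D a b}) ∧
      ∀ b ∈ B', d < #{a ∈ A' | D a b} := by
  let dense : Finset (Finset V × Finset V) :=
    {P ∈ A.powerset ×ˢ B.powerset | d * (#P.1 + #P.2 - 1) < #(Rel.interedges D P.1 P.2)}
  obtain ⟨⟨A', B'⟩, hP, hmin⟩ :=
    dense.exists_min_image (fun P => #P.1 + #P.2) ⟨(A, B), by simp [dense, h]⟩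
  simp only [dense, mem_filter, mem_product, mem_powerset] at hP hmin
  obtain ⟨⟨hA, hB⟩, hdense⟩ := hP
  obtain ⟨hA', hB'⟩ := nonempty_of_card_interedges_pos (Nat.zero_lt_of_lt hdense)
  have hs : 2 ≤ #A' + #B' := by
    have := hA'.card_pos; have := hB'.card_pos; omega
  refine ⟨A', hA, B', hB, hA', fun a ha => ?_, fun b hb => ?_⟩
  · by_contra! hdeg
    have : #A' + #B' ≤ #(A'.erase a) + #B' :=
      hmin (A'.erase a, B') ⟨⟨(erase_subset a A').trans hA, hB⟩, ?_⟩
    · rw [card_erase_of_mem ha] at this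
      have := hA'.card_pos
      omega
    rw [← card_interedges_erase_left_add ha] at hdense
    simpa [card_erase_of_mem ha, Nat.sub_add_comm hA'.card_pos] using
      Nat.mul_sub_one_sub_one_lt hs hdeg hdense
  · by_contra! hdeg
    have : #A' + #B' ≤ #A' + #(B'.erase b) :=
      hmin (A', B'.erase b) ⟨⟨hA, (erase_subset b B').trans hB⟩, ?_⟩
    · rw [card_erase_of_mem hb] at this
      have := hB'.card_pos
      omega
    rw [← card_interedges_erase_right_add A' hb] at hdense
    simpa [card_erase_of_mem hb, ← Nat.add_sub_assoc hB'.card_pos] using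
      Nat.mul_sub_one_sub_one_lt hs hdeg hdense

lemma mul_card_le_card_interedges_of_le_card {c : ℕ} {W : Finset V}
    (hW : ∀ v ∈ W, 2 * c ≤ #{w ∈ W | (SimpleGraph.fromRel D).Adj v w}) :
    c * #W ≤ #(Rel.interedges D W W) := by
  have hdeg : ∀ v ∈ W, 2 * c ≤ #{w ∈ W | D v w} + #{w ∈ W | D w v} := fun v hv =>
    (hW v hv).trans <| (card_le_card fun w => by simp +contextual).trans (card_union_le _ _)
  have := sum_le_sum hdeg
  rw [sum_add_distrib, ← card_interedges_eq_sum_left, ← card_interedges_eq_sum_right,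
    sum_const, smul_eq_mul] at this
  linarith

end Interedges

section DirectedCut

variable {V : Type*} [Fintype V] [DecidableEq V]

lemma four_mul_card_filter_eq_true_and_eq_false {u v : V} (huv : u ≠ v) :
    4 * #{f : V → Bool | f u = true ∧ f v = false} = 2 ^ Fintype.card V := by
  let s : V → Finset Bool := Function.update (fun _ => univ) u {true}
  have hfilter : ({f : V → Bool | f u = true ∧ f v = false} : Finset _) =
      {f ∈ Fintype.piFinset s | f v = false} := by
    ext f
    simp only [mem_filter, mem_univ, true_and, Fintype.mem_piFinset, s]
    constructor
    · rintro ⟨hu, hv⟩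
      refine ⟨fun w => ?_, hv⟩
      rcases eq_or_ne w u with rfl | hw <;> simp [*]
    · rintro ⟨hf, hv⟩
      simpa [hv] using hf u
  have hu : u ∈ univ.erase v := mem_erase.2 ⟨huv, mem_univ u⟩
  have hcard : #((univ.erase v).erase u) + 2 = Fintype.card V := by
    rw [card_erase_of_mem hu, card_erase_of_mem (mem_univ v), card_univ]
    have : 1 < Fintype.card V := Fintype.one_lt_card_iff.2 ⟨u, v, huv⟩
    omega
  rw [hfilter, Fintype.card_filter_piFinset_eq_of_mem (α := fun _ => Bool) _ _
      (by simp [s, huv.symm]), ← prod_erase_mul _ _ hu, prod_congr rfl (g := fun _ => 2),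
    prod_const, ← hcard]
  · simp [s]
    ring
  · intro j hj
    simp [s, Function.update_of_ne (ne_of_mem_erase hj)]

/-- Each pair of distinct vertices goes from `true` to `false` under exactly a quarter of all
colourings `V → Bool`, so some colouring does at least as well as the average. -/
lemma exists_card_le_four_mul_card_filter (E : Finset (V × V)) (hE : ∀ p ∈ E, p.1 ≠ p.2) :
    ∃ f : V → Bool, #E ≤ 4 * #{p ∈ E | f p.1 = true ∧ f p.2 = false} := by
  have hsum : ∑ _f : V → Bool, #E =
      ∑ f : V → Bool, 4 * #{p ∈ E | f p.1 = true ∧ f p.2 = false} :=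
    calc ∑ _f : V → Bool, #E
        = ∑ p ∈ E, 4 * #{f : V → Bool | f p.1 = true ∧ f p.2 = false} := by
          rw [sum_congr rfl fun p hp => four_mul_card_filter_eq_true_and_eq_false (hE p hp)]
          simp [mul_comm]
      _ = _ := by
          simp only [card_filter, mul_sum]
          exact sum_comm
  obtain ⟨f, -, hf⟩ := exists_le_of_sum_le univ_nonempty hsum.le
  exact ⟨f, hf⟩

lemma exists_disjoint_card_interedges_le_four_mul {D : V → V → Prop} [DecidableRel D]
    (hD : ∀ v, ¬ D v v) (W : Finset V) :
    ∃ A ⊆ W, ∃ B ⊆ W, Disjoint A B ∧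
      #(Rel.interedges D W W) ≤ 4 * #(Rel.interedges D A B) := by
  obtain ⟨f, hf⟩ := exists_card_le_four_mul_card_filter (Rel.interedges D W W) fun p hp hp' =>
    hD p.1 (hp' ▸ (Rel.mem_interedges_iff.1 hp).2.2)
  refine ⟨{w ∈ W | f w = true}, filter_subset _ _, {w ∈ W | f w = false}, filter_subset _ _,
    disjoint_filter.2 fun w _ hw => by simp [hw], hf.trans_eq ?_⟩
  congr 2
  ext p
  simp only [mem_filter, Rel.mem_interedges_iff]
  tauto

end DirectedCut

section ArcGraph

variable {V : Type*} {D : V → V → Prop}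

def arcGraph (D : V → V → Prop) (A B : Finset V) : SimpleGraph V :=
  SimpleGraph.fromRel fun a b => a ∈ A ∧ b ∈ B ∧ D a b

lemma arcGraph_flip (A B : Finset V) : arcGraph (flip D) B A = arcGraph D A B := by
  ext u v
  simp only [arcGraph, SimpleGraph.fromRel_adj, flip]
  tauto

variable {A B : Finset V}

lemma arcGraph_adj_iff_of_mem_left (hAB : Disjoint A B) {u v : V} (hu : u ∈ A) :
    (arcGraph D A B).Adj u v ↔ v ∈ B ∧ D u v := by
  simp only [arcGraph, SimpleGraph.fromRel_adj]
  constructor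
  · rintro ⟨-, ⟨-, hv, huv⟩ | ⟨-, hu', -⟩⟩
    · exact ⟨hv, huv⟩
    · exact absurd hu' (disjoint_left.1 hAB hu)
  · rintro ⟨hv, huv⟩
    exact ⟨fun h => disjoint_left.1 hAB hu (h ▸ hv), .inl ⟨hu, hv, huv⟩⟩

lemma mem_of_arcGraph_adj_of_mem_left (hAB : Disjoint A B) {u v : V} (hu : u ∈ A)
    (huv : (arcGraph D A B).Adj u v) : v ∈ B :=
  ((arcGraph_adj_iff_of_mem_left hAB hu).1 huv).1

lemma mem_of_arcGraph_adj_of_mem_right (hAB : Disjoint A B) {u v : V} (hu : u ∈ B)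
    (huv : (arcGraph D A B).Adj u v) : v ∈ A := by
  rw [← arcGraph_flip] at huv
  exact mem_of_arcGraph_adj_of_mem_left hAB.symm hu huv

lemma mem_of_arcGraph_path (hAB : Disjoint A B) {x : ℕ → V} {n : ℕ}
    (hpath : ∀ i < n, (arcGraph D A B).Adj (x i) (x (i + 1))) (h0 : x 0 ∈ A) (i : ℕ) :
    (2 * i ≤ n → x (2 * i) ∈ A) ∧ (2 * i + 1 ≤ n → x (2 * i + 1) ∈ B) := by
  induction i with
  | zero => exact ⟨fun _ => h0, fun h => mem_of_arcGraph_adj_of_mem_left hAB h0 (hpath 0 h)⟩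
  | succ i ih =>
    have hA : 2 * (i + 1) ≤ n → x (2 * (i + 1)) ∈ A := fun h =>
      mem_of_arcGraph_adj_of_mem_right hAB (ih.2 (by omega)) (hpath (2 * i + 1) (by omega))
    exact ⟨hA, fun h => mem_of_arcGraph_adj_of_mem_left hAB (hA (by omega)) (hpath _ (by omega))⟩

/-- The cycle alternates between `A` and `B`, so it is antidirected, and the out-neighbours of
`x 0` sit at distinct odd positions on it. -/
lemma exists_hasAntidirCycle_of_arcGraph_cycle [DecidableRel D] (hAB : Disjoint A B)
    {x : ℕ → V} {n : ℕ} (hx : Set.InjOn x (Set.Iic n))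
    (hpath : ∀ i < n, (arcGraph D A B).Adj (x i) (x (i + 1)))
    (hclose : (arcGraph D A B).Adj (x n) (x 0))
    (hnbr : ∀ w, (arcGraph D A B).Adj (x 0) w → ∃ j ≤ n, x j = w) (h0 : x 0 ∈ A) :
    ∃ m, #{b ∈ B | D (x 0) b} ≤ m ∧ HasAntidirCycle D m := by
  classical
  have hside := mem_of_arcGraph_path hAB hpath h0
  have hxn : x n ∈ B := mem_of_arcGraph_adj_of_mem_left hAB h0 hclose.symm
  obtain ⟨m, hm⟩ : ∃ m, n + 1 = 2 * m := by
    rcases Nat.even_or_odd' n with ⟨i, rfl | rfl⟩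
    · exact absurd hxn (disjoint_left.1 hAB ((hside i).1 le_rfl))
    · exact ⟨i + 1, by ring⟩
  have hinj {i j : ℕ} (hi : i ≤ n) (hj : j ≤ n) (h : x i = x j) : i = j := hx hi hj h
  refine ⟨m, ?_, hasAntidirCycle_of_nat (by omega) (fun i => x (2 * i)) (fun i => x (2 * i + 1))
    (fun i hi j hj h => by have := hinj (by have := Set.mem_Iio.1 hi; omega) (by have := Set.mem_Iio.1 hj; omega) h; omega)
    (fun i hi j hj h => by have := hinj (by have := Set.mem_Iio.1 hi; omega) (by have := Set.mem_Iio.1 hj; omega) h; omega)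
    (fun i hi j hj h => by have := hinj (by omega) (by omega) h; omega) fun i hi => ⟨?_, ?_⟩⟩
  · calc #{b ∈ B | D (x 0) b} ≤ #((range m).image fun i => x (2 * i + 1)) := by
          refine card_le_card fun b hb => ?_
          rw [mem_filter, ← arcGraph_adj_iff_of_mem_left hAB h0] at hb
          obtain ⟨j, hj, rfl⟩ := hnbr b hb
          rcases Nat.even_or_odd' j with ⟨i, rfl | rfl⟩
          · exact absurd (mem_of_arcGraph_adj_of_mem_left hAB h0 hb)
              (disjoint_left.1 hAB ((hside i).1 hj))
          · exact mem_image.2 ⟨i, mem_range.2 (by omega), rfl⟩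
      _ ≤ m := card_image_le.trans (card_range m).le
  · exact ((arcGraph_adj_iff_of_mem_left hAB ((hside i).1 (by omega))).1
      (hpath (2 * i) (by omega))).2
  · rcases Nat.lt_or_ge (i + 1) m with hi1 | hi1
    · have hadj := hpath (2 * i + 1) (by omega)
      rw [show 2 * i + 1 + 1 = 2 * (i + 1) by ring] at hadj
      rw [Nat.mod_eq_of_lt hi1]
      exact ((arcGraph_adj_iff_of_mem_left hAB ((hside (i + 1)).1 (by omega))).1 hadj.symm).2
    · obtain rfl : i + 1 = m := by omega
      rw [Nat.mod_self, show 2 * i + 1 = n by omega]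
      exact ((arcGraph_adj_iff_of_mem_left hAB h0).1 hclose.symm).2

lemma exists_hasAntidirCycle_of_forall_le_card [Fintype V] [DecidableRel D] {k : ℕ} (hk : 0 < k)
    (hAB : Disjoint A B) (hA : A.Nonempty)
    (hdegA : ∀ a ∈ A, k ≤ #{b ∈ B | D a b}) (hdegB : ∀ b ∈ B, k ≤ #{a ∈ A | D a b}) :
    ∃ m, k ≤ m ∧ HasAntidirCycle D m := by
  obtain ⟨a, ha⟩ := hA
  obtain ⟨b, hb⟩ := card_pos.1 (hk.trans_le (hdegA a ha))
  obtain ⟨n, x, hx, hpath, hclose, hnbr⟩ := (arcGraph D A B).exists_cycle_adj_imp_mem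
    ((arcGraph_adj_iff_of_mem_left hAB ha).2 (mem_filter.1 hb))
  have h0 : x 0 ∈ A ∨ x 0 ∈ B := by
    simp only [arcGraph, SimpleGraph.fromRel_adj] at hclose
    tauto
  rcases h0 with h0 | h0
  · obtain ⟨m, hm, hcyc⟩ := exists_hasAntidirCycle_of_arcGraph_cycle hAB hx hpath hclose hnbr h0
    exact ⟨m, (hdegA _ h0).trans hm, hcyc⟩
  · let : DecidableRel (flip D) := fun u v => inferInstanceAs (Decidable (D v u))
    rw [← arcGraph_flip] at hpath hclose hnbr
    obtain ⟨m, hm, hcyc⟩ :=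
      exists_hasAntidirCycle_of_arcGraph_cycle hAB.symm hx hpath hclose hnbr h0
    exact ⟨m, (hdegB _ h0).trans hm, hcyc.of_flip⟩

end ArcGraph

/-- Cohen–Havet–Lochet–Nisse: for `k ≥ 2`, every oriented graph (no loops, no
digons) with chromatic number at least `8k - 7` contains an antidirected cycle
of length at least `2k`. -/
theorem stmt9 {V : Type*} [Fintype V] (D : V → V → Prop) (k : ℕ) (hk : 2 ≤ k)
    (horiented : ∀ x y, D x y → ¬ D y x)
    (h : ((8 * k - 7 : ℕ) : ℕ∞) ≤ (SimpleGraph.fromRel D).chromaticNumber) :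
    ∃ m : ℕ, k ≤ m ∧ HasAntidirCycle D m := by
  classical
  obtain ⟨W, hW, hWdeg⟩ :=
    (SimpleGraph.fromRel D).exists_nonempty_forall_le_card_of_le_chromaticNumber (c := 8 * k - 8)
      (by rwa [show 8 * k - 8 + 1 = 8 * k - 7 by omega])
  have harcs : 4 * (k - 1) * #W ≤ #(Rel.interedges D W W) :=
    mul_card_le_card_interedges_of_le_card fun v hv => by have := hWdeg v hv; omega
  obtain ⟨A, hA, B, hB, hAB, hcut⟩ :=
    exists_disjoint_card_interedges_le_four_mul (fun v hv => horiented v v hv hv) W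
  have hdense : (k - 1) * (#A + #B - 1) < #(Rel.interedges D A B) := by
    have hsize : #A + #B ≤ #W := card_union_of_disjoint hAB ▸ card_le_card (union_subset hA hB)
    calc (k - 1) * (#A + #B - 1) < (k - 1) * #W :=
          Nat.mul_lt_mul_of_pos_left (by have := hW.card_pos; omega) (by omega)
      _ ≤ #(Rel.interedges D A B) := by linarith
  obtain ⟨A', hA', B', hB', hne, hdegA, hdegB⟩ := exists_subset_forall_lt_card_filter hdense
  exact exists_hasAntidirCycle_of_forall_le_card (by omega) (hAB.mono hA' hB') hne
    (fun a ha => by have := hdegA a ha; omega) (fun b hb => by have := hdegB b hb; omega)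
end

section
/- Let T be an out-tree rooted at r in a digraph D, and suppose (x,y) is an arc of D with l_T(x) ≥ l_T(y) and y not an ancestor of x in T. Let T' be obtained from T by removing the arc of T with head y and adding the arc (x,y). Then T' is a spanning out-tree of D, l_{T'}(v) ≥ l_T(v) for every vertex v, and l_{T'}(y) > l_T(y). -/
/-!
Re-hanging `y` below `x` keeps a tree because `y` is not an ancestor of `x`: the tree path
from `x` to the root avoids `y`, so it is unchanged and no cycle appears. Levels can only grow,
since in the new tree every vertex `u` has a parent whose old level is at least
`T.level u - 1` (for `u = y` this is `T.level y ≤ T.level x`); descending along new parents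
therefore takes at least `T.level v - 1` steps to reach the root. Finally the new level of `y`
is one more than the new level of `x`, which is at least `T.level x ≥ T.level y`.
-/

namespace OutTree

variable {V : Type*} (T : OutTree V) {u v : V}

lemma level_le_of_iterate_eq_root {n : ℕ} (h : T.parent^[n] v = T.root) : T.level v ≤ n + 1 :=
  Nat.add_le_add_right (Nat.sInf_le h) 1

lemma iterate_level_sub_one : T.parent^[T.level v - 1] v = T.root :=
  Nat.sInf_mem (T.reach v)

lemma level_root : T.level T.root = 1 :=
  le_antisymm (T.level_le_of_iterate_eq_root (n := 0) rfl) (Nat.le_add_left 1 _)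

lemma level_parent (hv : v ≠ T.root) : T.level v = T.level (T.parent v) + 1 := by
  have hv_pos : T.level v - 1 ≠ 0 := fun h =>
    hv (by simpa [h] using T.iterate_level_sub_one (v := v))
  obtain ⟨k, hk⟩ := Nat.exists_eq_succ_of_ne_zero hv_pos
  have hk_root : T.parent^[k] (T.parent v) = T.root := by
    rw [← Function.iterate_succ_apply, ← hk, T.iterate_level_sub_one]
  have hle : T.level v ≤ T.level (T.parent v) - 1 + 1 + 1 := T.level_le_of_iterate_eq_root <| by
    rw [Function.iterate_succ_apply, T.iterate_level_sub_one]
  have hge : T.level (T.parent v) ≤ k + 1 := T.level_le_of_iterate_eq_root hk_root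
  have hpos : 1 ≤ T.level (T.parent v) := Nat.le_add_left 1 _
  omega

lemma anc_root (v : V) : T.Anc T.root v := T.reach v

lemma ne_root_of_not_anc (h : ¬ T.Anc u v) : u ≠ T.root :=
  fun hu => h (hu ▸ T.anc_root v)

lemma level_le_of_iterate_eq_root_of_level_le {f : V → V}
    (hf : ∀ u, u ≠ T.root → T.level u ≤ T.level (f u) + 1) :
    ∀ (n : ℕ) (v : V), f^[n] v = T.root → T.level v ≤ n + 1
  | 0, v, h => by rw [show v = T.root from h, T.level_root]
  | n + 1, v, h => by
    by_cases hv : v = T.root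
    · rw [hv, T.level_root]; omega
    · have := level_le_of_iterate_eq_root_of_level_le hf n (f v) h
      have := hf v hv
      omega

lemma level_le_level {T' : OutTree V} (hroot : T'.root = T.root)
    (hparent : ∀ u, u ≠ T.root → T.level u ≤ T.level (T'.parent u) + 1) (v : V) :
    T.level v ≤ T'.level v :=
  T.level_le_of_iterate_eq_root_of_level_le hparent _ v (hroot ▸ T'.iterate_level_sub_one)

section Reattach

variable [DecidableEq V] {x y : V}

lemma iterate_update_of_not_anc (hyx : ¬ T.Anc y x) (z : V) (n : ℕ) :
    (Function.update T.parent y z)^[n] x = T.parent^[n] x := by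
  induction n with
  | zero => rfl
  | succ n ih =>
    rw [Function.iterate_succ_apply', Function.iterate_succ_apply', ih,
      Function.update_of_ne fun h => hyx ⟨n, h⟩]

lemma reach_update (hyx : ¬ T.Anc y x) (v : V) :
    ∃ n, (Function.update T.parent y x)^[n] v = T.root := by
  obtain ⟨n, hn⟩ := T.reach v
  induction n generalizing v with
  | zero => exact ⟨0, hn⟩
  | succ n ih =>
    by_cases hvy : v = y
    · obtain ⟨m, hm⟩ := T.reach x
      refine ⟨m + 1, ?_⟩
      rw [Function.iterate_succ_apply, hvy, Function.update_self,
        T.iterate_update_of_not_anc hyx, hm]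
    · obtain ⟨m, hm⟩ := ih (T.parent v) hn
      exact ⟨m + 1, by rw [Function.iterate_succ_apply, Function.update_of_ne hvy, hm]⟩

def reattach (hyx : ¬ T.Anc y x) : OutTree V where
  root := T.root
  parent := Function.update T.parent y x
  parent_root := by rw [Function.update_of_ne (T.ne_root_of_not_anc hyx).symm, T.parent_root]
  reach := T.reach_update hyx

variable (hyx : ¬ T.Anc y x)

lemma spanningOf_reattach {D : V → V → Prop} (hspan : T.SpanningOf D) (hxy : D x y) :
    (T.reattach hyx).SpanningOf D := by
  intro v hv
  by_cases hvy : v = y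
  · subst hvy
    simpa [reattach] using hxy
  · simpa [reattach, Function.update_of_ne hvy] using hspan v hv

variable {T}

lemma level_le_level_reattach (hlev : T.level y ≤ T.level x) (v : V) :
    T.level v ≤ (T.reattach hyx).level v := by
  refine T.level_le_level (T' := T.reattach hyx) rfl (fun u hu => ?_) v
  by_cases huy : u = y
  · subst huy
    simp only [reattach, Function.update_self]
    omega
  · simp only [reattach, Function.update_of_ne huy]
    exact (T.level_parent hu).le

lemma level_lt_level_reattach (hlev : T.level y ≤ T.level x) :
    T.level y < (T.reattach hyx).level y := by
  have hy : (T.reattach hyx).level y = (T.reattach hyx).level x + 1 := by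
    rw [(T.reattach hyx).level_parent (T.ne_root_of_not_anc hyx)]
    simp [reattach]
  have := level_le_level_reattach hyx hlev x
  omega

end Reattach

end OutTree

theorem stmt19_general {V : Type*} [DecidableEq V] (D : V → V → Prop)
    (T : OutTree V) (hspan : T.SpanningOf D) (x y : V) (hxy : D x y)
    (hlev : T.level y ≤ T.level x) (hnanc : ¬ T.Anc y x) :
    ∃ T' : OutTree V, T'.root = T.root ∧
      T'.parent = Function.update T.parent y x ∧
      T'.SpanningOf D ∧
      (∀ v, T.level v ≤ T'.level v) ∧ T.level y < T'.level y :=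
  ⟨T.reattach hnanc, rfl, rfl, T.spanningOf_reattach hnanc hspan hxy,
    OutTree.level_le_level_reattach hnanc hlev, OutTree.level_lt_level_reattach hnanc hlev⟩

/-- Rerooting step: if `(x, y)` is an arc of `D` with `level x ≥ level y` and
`y` not an ancestor of `x` in a spanning out-tree `T`, then replacing the tree
arc entering `y` by `(x, y)` yields a spanning out-tree `T'` in which no level
decreases and the level of `y` strictly increases. -/
theorem stmt19 {V : Type*} [Fintype V] [DecidableEq V] (D : V → V → Prop)
    (T : OutTree V) (hspan : T.SpanningOf D) (x y : V) (hxy : D x y)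
    (hlev : T.level y ≤ T.level x) (hnanc : ¬ T.Anc y x) :
    ∃ T' : OutTree V, T'.root = T.root ∧
      T'.parent = Function.update T.parent y x ∧
      T'.SpanningOf D ∧
      (∀ v, T.level v ≤ T'.level v) ∧ T.level y < T'.level y :=
  stmt19_general D T hspan x y hxy hlev hnanc
end
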